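/- Let (X, g, J) be a Kähler manifold of real dimension 2n and Y a totally real totally geodesic n-dimensional submanifold such that the mixed sectional curvature of X with respect to Y is a constant c, i.e. Rm^X(ζ, Jη, Jη, ζ) = c for all unit tangent fields ζ, η of Y. Then the induced metric g|_Y is Einstein. -/

import Mathlib

/-!
Take the trace of the ambient Einstein condition over the adapted frame `(e_α, J e_α)`.
The `e_α` half is the Ricci curvature of `Y`. In the `J e_α` half, pair symmetry turns each term
into the Jacobi operator `ζ ↦ R(ζ, J e_α) J e_α` paired with `ζ`. This operator is symmetric, and
constant mixed curvature fixes its quadratic form on `T_Y` to `c ‖ζ‖²`. Polarization then gives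
`c ⟪ζ, η⟫` for each `α`, so `Ric_Y = (λ - n c) g`.
-/

open scoped RealInnerProductSpace

section CurvatureOperator

variable {V : Type*} [NormedAddCommGroup V] [InnerProductSpace ℝ V]

theorem LinearMap.IsSymmetric.inner_eq_mul_inner_of_unit {L : V →ₗ[ℝ] V} (hL : L.IsSymmetric)
    {W : Submodule ℝ V} {c : ℝ} (hunit : ∀ u ∈ W, ⟪u, u⟫ = 1 → ⟪L u, u⟫ = c) :
    ∀ ζ ∈ W, ∀ η ∈ W, ⟪L ζ, η⟫ = c * ⟪ζ, η⟫ := by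
  have hquad : ∀ ζ ∈ W, ⟪L ζ, ζ⟫ = c * ⟪ζ, ζ⟫ := by
    intro ζ hζ
    rcases eq_or_ne ζ 0 with rfl | hζ0
    · simp
    have hnorm : ‖ζ‖ ≠ 0 := norm_ne_zero_iff.mpr hζ0
    let u := ‖ζ‖⁻¹ • ζ
    have hu : ⟪u, u⟫ = 1 := by
      rw [real_inner_smul_left, real_inner_smul_right, real_inner_self_eq_norm_sq]
      field_simp
    calc ⟪L ζ, ζ⟫ = ‖ζ‖ ^ 2 * ⟪L u, u⟫ := by
          rw [map_smul, real_inner_smul_left, real_inner_smul_right]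
          field_simp
      _ = c * ⟪ζ, ζ⟫ := by rw [hunit u (W.smul_mem _ hζ) hu, real_inner_self_eq_norm_sq]; ring
  intro ζ hζ η hη
  have hsum := hquad (ζ + η) (W.add_mem hζ hη)
  simp only [map_add, inner_add_left, inner_add_right] at hsum
  rw [real_inner_comm ζ η, hL η ζ, real_inner_comm (L ζ) η] at hsum
  linarith [hquad ζ hζ, hquad η hη]

variable (R : V →ₗ[ℝ] V →ₗ[ℝ] V →ₗ[ℝ] V)

def jacobiOp (x : V) : V →ₗ[ℝ] V := (R.flip x).flip x

@[simp]
theorem jacobiOp_apply (x ζ : V) : jacobiOp R x ζ = R ζ x x := rfl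

variable {R}

theorem jacobiOp_isSymmetric (hRanti' : ∀ a b c d, ⟪R a b c, d⟫ = -⟪R a b d, c⟫)
    (hRpair : ∀ a b c d, ⟪R a b c, d⟫ = ⟪R c d a, b⟫) (x : V) :
    (jacobiOp R x).IsSymmetric := by
  have hRanti_first : ∀ a b c d, ⟪R a b c, d⟫ = -⟪R b a c, d⟫ := fun a b c d => by
    rw [hRpair, hRanti', hRpair]
  intro ζ η
  rw [jacobiOp_apply, jacobiOp_apply, real_inner_comm _ ζ, hRanti_first, hRanti', hRpair, neg_neg]

end CurvatureOperator

theorem stmt_13_general {V : Type*} [NormedAddCommGroup V] [InnerProductSpace ℝ V]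
    (n : ℕ)
    (J : V →ₗ[ℝ] V)
    (W : Submodule ℝ V)
    (e : Fin n → V) (he : ∀ α, e α ∈ W)
    (horth : ∀ α β, ⟪e α, e β⟫ = if α = β then (1:ℝ) else 0)
    (R : V →ₗ[ℝ] V →ₗ[ℝ] V →ₗ[ℝ] V)                 -- the curvature endomorphism
    (hRanti' : ∀ a b c d, ⟪R a b c, d⟫ = -⟪R a b d, c⟫)
    (hRpair : ∀ a b c d, ⟪R a b c, d⟫ = ⟪R c d a, b⟫)
    (lam : ℝ)
    (hEin : ∀ ζ η,                                    -- ambient Einstein: Ric_g = λ g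
      ((∑ α, ⟪R (e α) ζ η, e α⟫) + ∑ α, ⟪R (J (e α)) ζ η, J (e α)⟫) = lam * ⟪ζ, η⟫)
    (RicY : V → V → ℝ)
    (hRicY : ∀ ζ η, ζ ∈ W → η ∈ W →                   -- Gauss formula (Y totally geodesic)
      RicY ζ η = ∑ α, ⟪R (e α) ζ η, e α⟫)
    (c : ℝ)
    (hmixed : ∀ ζ η, ζ ∈ W → η ∈ W → ⟪ζ, ζ⟫ = 1 → ⟪η, η⟫ = 1 →
      ⟪R ζ (J η) (J η), ζ⟫ = c) :                    -- constant mixed sectional curvature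
    ∃ κ : ℝ, ∀ ζ η, ζ ∈ W → η ∈ W → RicY ζ η = κ * ⟪ζ, η⟫ := by
  have hjacobi : ∀ α, ∀ ζ ∈ W, ∀ η ∈ W, ⟪jacobiOp R (J (e α)) ζ, η⟫ = c * ⟪ζ, η⟫ := fun α =>
    (jacobiOp_isSymmetric hRanti' hRpair _).inner_eq_mul_inner_of_unit fun u hu huu =>
      hmixed u (e α) hu (he α) huu (by simpa using horth α α)
  refine ⟨lam - n * c, fun ζ η hζ hη => ?_⟩
  have hJpart : ∑ α, ⟪R (J (e α)) ζ η, J (e α)⟫ = n * c * ⟪ζ, η⟫ := by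
    have hterm : ∀ α, ⟪R (J (e α)) ζ η, J (e α)⟫ = c * ⟪ζ, η⟫ := fun α => by
      rw [hRpair, ← jacobiOp_apply, hjacobi α η hη ζ hζ, real_inner_comm]
    simp only [hterm, Finset.sum_const, Finset.card_univ, Fintype.card_fin, nsmul_eq_mul]
    ring
  rw [hRicY ζ η hζ hη]
  linarith [hEin ζ η]

/-- Let `(X,g,J)` be Kähler–Einstein (`Ric_g = λg`) of real dimension `2n` and `Y` a
totally real totally geodesic `n`-dimensional submanifold such that the mixed sectional
curvature of `X` with respect to `Y` is a constant `c`, i.e.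
`Rm^X(ζ, Jη, Jη, ζ) = c` for all unit tangent fields `ζ, η` of `Y`.
Then the induced metric `g|_Y` is Einstein.

Pointwise model: `V` the ambient tangent space with metric the inner product, `W = T_Y`,
`R` the curvature endomorphism (trilinear), `Rm a b c d = ⟪R a b c, d⟫` the
(0,4)-tensor with the usual symmetries, `(e_α)` an adapted orthonormal frame,
and `Ric_{g|_Y}` given by the Gauss-equation trace formula for the totally geodesic `Y`. -/
theorem stmt_13 {V : Type*} [NormedAddCommGroup V] [InnerProductSpace ℝ V]
    (n : ℕ) (hn : 1 ≤ n)
    (J : V →ₗ[ℝ] V) (hJ : ∀ v, J (J v) = -v)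
    (hJiso : ∀ u v, ⟪J u, J v⟫ = ⟪u, v⟫)
    (W : Submodule ℝ V) (htotreal : W ⊓ W.map J = ⊥)
    (e : Fin n → V) (he : ∀ α, e α ∈ W)
    (horth : ∀ α β, ⟪e α, e β⟫ = if α = β then (1:ℝ) else 0)
    (hbasis : ∀ w ∈ W, w = ∑ α, ⟪w, e α⟫ • e α)     -- (e_α) is an orthonormal basis of T_Y
    (R : V →ₗ[ℝ] V →ₗ[ℝ] V →ₗ[ℝ] V)                 -- the curvature endomorphism
    (hRanti : ∀ a b c d, ⟪R a b c, d⟫ = -⟪R b a c, d⟫   -- curvature symmetries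
      )
    (hRanti' : ∀ a b c d, ⟪R a b c, d⟫ = -⟪R a b d, c⟫)
    (hRpair : ∀ a b c d, ⟪R a b c, d⟫ = ⟪R c d a, b⟫)
    (hRJ : ∀ a b c, R a b (J c) = J (R a b c))       -- Kähler identity
    (lam : ℝ)
    (hEin : ∀ ζ η,                                    -- ambient Einstein: Ric_g = λ g
      ((∑ α, ⟪R (e α) ζ η, e α⟫) + ∑ α, ⟪R (J (e α)) ζ η, J (e α)⟫) = lam * ⟪ζ, η⟫)
    (RicY : V → V → ℝ)
    (hRicY : ∀ ζ η, ζ ∈ W → η ∈ W →                   -- Gauss formula (Y totally geodesic)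
      RicY ζ η = ∑ α, ⟪R (e α) ζ η, e α⟫)
    (c : ℝ)
    (hmixed : ∀ ζ η, ζ ∈ W → η ∈ W → ⟪ζ, ζ⟫ = 1 → ⟪η, η⟫ = 1 →
      ⟪R ζ (J η) (J η), ζ⟫ = c) :                    -- constant mixed sectional curvature
    ∃ κ : ℝ, ∀ ζ η, ζ ∈ W → η ∈ W → RicY ζ η = κ * ⟪ζ, η⟫ :=
  stmt_13_general n J W e he horth R hRanti' hRpair lam hEin RicY hRicY c hmixed
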